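/- Suppose m > 0. Then for every Lipschitz function u : ℝᵈ → ℝ the function y ↦ Ψ(m^{1/α}‖y‖) · min(1, ‖y‖^{−(d+α)}) · |u(y)|² belongs to L¹(ℝᵈ) with respect to Lebesgue measure. -/

import Mathlib

/-!
Ψ is bounded by `1`, and since `t e^{-t} ≤ 1` for `t = r²/s`, multiplying the integrand of
`I(r)` by `r²` costs only one extra power of `s`: `r² I(r) ≤ ∫₀^∞ s^{(d+α)/2} e^{-s/4} ds`.
Hence `Ψ(r) = O(r⁻²)`, which absorbs the quadratic growth `|u y|² ≤ C (1 + ‖y‖)²` of a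
Lipschitz function. What remains is bounded by a multiple of `(1 + ‖y‖)^{-(d+α)}`, integrable
on `ℝᵈ` because `α > 0`.
-/

open MeasureTheory

/-- `I(r) = ∫₀^∞ s^{(d+α)/2 − 1} e^{−s/4 − r²/s} ds`. -/
noncomputable def Ifun (d : ℕ) (α : ℝ) (r : ℝ) : ℝ :=
  ∫ s in Set.Ioi (0 : ℝ), s ^ (((d : ℝ) + α) / 2 - 1) * Real.exp (-(s / 4) - r ^ 2 / s)

/-- `Ψ(r) = I(r)/I(0)`. -/
noncomputable def Psi (d : ℕ) (α : ℝ) (r : ℝ) : ℝ := Ifun d α r / Ifun d α 0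

open Real Set

theorem integrableOn_rpow_mul_exp_neg_div_four {ν : ℝ} (hν : -1 < ν) :
    IntegrableOn (fun s : ℝ => s ^ ν * exp (-(s / 4))) (Ioi 0) := by
  simpa [rpow_one, neg_mul, div_eq_inv_mul] using
    integrableOn_rpow_mul_exp_neg_mul_rpow hν one_pos (by norm_num : (0 : ℝ) < 4⁻¹)

section Ifun

variable {d : ℕ} {α : ℝ}

theorem measurable_Ifun : Measurable (Ifun d α) := by
  have h : Measurable (Function.uncurry fun r s : ℝ =>
      s ^ (((d : ℝ) + α) / 2 - 1) * exp (-(s / 4) - r ^ 2 / s)) := by fun_prop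
  exact h.stronglyMeasurable.integral_prod_right'.measurable

theorem Ifun_integrand_le (r : ℝ) {s : ℝ} (hs : 0 < s) :
    s ^ (((d : ℝ) + α) / 2 - 1) * exp (-(s / 4) - r ^ 2 / s) ≤
      s ^ (((d : ℝ) + α) / 2 - 1) * exp (-(s / 4)) := by
  gcongr
  have : 0 ≤ r ^ 2 / s := by positivity
  linarith

theorem integrableOn_Ifun_integrand (hdα : 0 < (d : ℝ) + α) (r : ℝ) :
    IntegrableOn (fun s : ℝ =>
      s ^ (((d : ℝ) + α) / 2 - 1) * exp (-(s / 4) - r ^ 2 / s)) (Ioi 0) := by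
  refine (integrableOn_rpow_mul_exp_neg_div_four
    (ν := ((d : ℝ) + α) / 2 - 1) (by linarith)).mono' (by fun_prop) ?_
  filter_upwards [ae_restrict_mem measurableSet_Ioi] with s (hs : 0 < s)
  rw [norm_of_nonneg (by positivity)]
  exact Ifun_integrand_le r hs

theorem Ifun_nonneg (r : ℝ) : 0 ≤ Ifun d α r :=
  setIntegral_nonneg measurableSet_Ioi fun s (hs : 0 < s) => by positivity

theorem Ifun_zero_pos (hdα : 0 < (d : ℝ) + α) : 0 < Ifun d α 0 := by
  refine (setIntegral_pos_iff_support_of_nonneg_ae ?_ (integrableOn_Ifun_integrand hdα 0)).2 ?_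
  · filter_upwards [ae_restrict_mem measurableSet_Ioi] with s (hs : 0 < s)
    positivity
  · refine lt_of_lt_of_le (by simp) (measure_mono (s := Ioi (0 : ℝ)) fun s (hs : 0 < s) => ?_)
    exact ⟨by simp only [Function.mem_support]; positivity, hs⟩

theorem Ifun_le_Ifun_zero (hdα : 0 < (d : ℝ) + α) (r : ℝ) : Ifun d α r ≤ Ifun d α 0 := by
  refine setIntegral_mono_on (integrableOn_Ifun_integrand hdα r)
    (integrableOn_Ifun_integrand hdα 0) measurableSet_Ioi fun s (hs : 0 < s) => ?_
  simpa using Ifun_integrand_le r hs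

theorem sq_mul_Ifun_le (hdα : 0 < (d : ℝ) + α) (r : ℝ) :
    r ^ 2 * Ifun d α r ≤ ∫ s in Ioi 0, s ^ (((d : ℝ) + α) / 2) * exp (-(s / 4)) := by
  rw [Ifun, ← integral_const_mul]
  refine setIntegral_mono_on ((integrableOn_Ifun_integrand hdα r).const_mul _)
    (integrableOn_rpow_mul_exp_neg_div_four (by linarith)) measurableSet_Ioi
    fun s (hs : 0 < s) => ?_
  have hte : r ^ 2 / s * exp (-(r ^ 2 / s)) ≤ 1 :=
    (mul_exp_neg_le_exp_neg_one _).trans (by simp)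
  calc r ^ 2 * (s ^ (((d : ℝ) + α) / 2 - 1) * exp (-(s / 4) - r ^ 2 / s))
      = s ^ (((d : ℝ) + α) / 2) * exp (-(s / 4)) * (r ^ 2 / s * exp (-(r ^ 2 / s))) := by
        rw [rpow_sub_one hs.ne', sub_eq_add_neg, exp_add]
        field_simp
    _ ≤ s ^ (((d : ℝ) + α) / 2) * exp (-(s / 4)) :=
        mul_le_of_le_one_right (by positivity) hte

theorem measurable_Psi : Measurable (Psi d α) :=
  measurable_Ifun.div_const _

theorem Psi_nonneg (r : ℝ) : 0 ≤ Psi d α r :=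
  div_nonneg (Ifun_nonneg r) (Ifun_nonneg 0)

theorem Psi_le_one (hdα : 0 < (d : ℝ) + α) (r : ℝ) : Psi d α r ≤ 1 :=
  (div_le_one (Ifun_zero_pos hdα)).2 (Ifun_le_Ifun_zero hdα r)

theorem sq_mul_Psi_le (hdα : 0 < (d : ℝ) + α) (r : ℝ) :
    r ^ 2 * Psi d α r ≤
      (∫ s in Ioi 0, s ^ (((d : ℝ) + α) / 2) * exp (-(s / 4))) / Ifun d α 0 := by
  rw [Psi, ← mul_div_assoc]
  exact div_le_div_of_nonneg_right (sq_mul_Ifun_le hdα r) (Ifun_nonneg 0)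

end Ifun

theorem LipschitzWith.abs_le_mul_one_add_norm {E : Type*} [SeminormedAddCommGroup E] {K : NNReal}
    {u : E → ℝ} (hu : LipschitzWith K u) (y : E) : |u y| ≤ (|u 0| + K) * (1 + ‖y‖) := by
  have hy : |u y - u 0| ≤ K * ‖y‖ := by
    simpa [Real.dist_eq] using hu.dist_le_mul y 0
  calc |u y| ≤ |u 0| + K * ‖y‖ := by linarith [abs_sub_abs_le_abs_sub (u y) (u 0)]
    _ ≤ (|u 0| + K) * (1 + ‖y‖) := by nlinarith [abs_nonneg (u 0), norm_nonneg y, K.coe_nonneg]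

theorem min_one_rpow_neg_le {p r : ℝ} (hp : 0 ≤ p) (hr : 0 ≤ r) :
    min 1 (r ^ (-p)) ≤ 2 ^ p * (1 + r) ^ (-p) := by
  have h2p : (2 : ℝ) ^ p * 2 ^ (-p) = 1 := by rw [← rpow_add two_pos]; simp
  rcases le_total r 1 with hr1 | hr1
  · calc min 1 (r ^ (-p)) ≤ 2 ^ p * 2 ^ (-p) := h2p.ge.trans' (min_le_left _ _)
      _ ≤ 2 ^ p * (1 + r) ^ (-p) := by
        gcongr 2 ^ p * ?_
        exact rpow_le_rpow_of_nonpos (by positivity) (by linarith) (by linarith)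
  · calc min 1 (r ^ (-p)) ≤ 2 ^ p * (2 * r) ^ (-p) := by
          rw [mul_rpow zero_le_two hr, ← mul_assoc, h2p, one_mul]
          exact min_le_right _ _
      _ ≤ 2 ^ p * (1 + r) ^ (-p) := by
        gcongr 2 ^ p * ?_
        exact rpow_le_rpow_of_nonpos (by positivity) (by linarith) (by linarith)

section Integrable

variable {E : Type*} [NormedAddCommGroup E] [NormedSpace ℝ E] [FiniteDimensional ℝ E]
  [MeasurableSpace E] [BorelSpace E] {μ : Measure E} [μ.IsAddHaarMeasure]

theorem integrable_mul_min_one_rpow_neg_mul_sq_of_lipschitzWith {φ : ℝ → ℝ} {c p : ℝ}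
    {K : NNReal} {u : E → ℝ} (hφ : Measurable φ) (hφ0 : ∀ r, 0 ≤ φ r) (hφ1 : ∀ r, φ r ≤ 1)
    (hφc : ∀ r, r ^ 2 * φ r ≤ c) (hp : (Module.finrank ℝ E : ℝ) < p) (hu : LipschitzWith K u) :
    Integrable (fun y => φ ‖y‖ * min 1 (‖y‖ ^ (-p)) * |u y| ^ 2) μ := by
  have hu_meas := hu.continuous.measurable
  refine ((integrable_one_add_norm hp).const_mul
    (2 * (1 + c) * (|u 0| + K) ^ 2 * 2 ^ p)).mono' (by fun_prop) (ae_of_all _ fun y => ?_)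
  have hp0 : 0 ≤ p := (Nat.cast_nonneg _).trans hp.le
  have hφy : (1 + ‖y‖) ^ 2 * φ ‖y‖ ≤ 2 * (1 + c) := by
    nlinarith [hφ0 ‖y‖, hφ1 ‖y‖, hφc ‖y‖, sq_nonneg (1 - ‖y‖)]
  have huy : |u y| ^ 2 ≤ (|u 0| + K) ^ 2 * (1 + ‖y‖) ^ 2 := by
    rw [← mul_pow]
    exact pow_le_pow_left₀ (abs_nonneg _) (hu.abs_le_mul_one_add_norm y) 2
  rw [norm_of_nonneg (by have := hφ0 ‖y‖; positivity)]
  calc φ ‖y‖ * min 1 (‖y‖ ^ (-p)) * |u y| ^ 2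
      ≤ φ ‖y‖ * (2 ^ p * (1 + ‖y‖) ^ (-p)) * ((|u 0| + K) ^ 2 * (1 + ‖y‖) ^ 2) := by
        have := hφ0 ‖y‖
        gcongr
        exact min_one_rpow_neg_le hp0 (norm_nonneg y)
    _ = (1 + ‖y‖) ^ 2 * φ ‖y‖ * (|u 0| + K) ^ 2 * 2 ^ p * (1 + ‖y‖) ^ (-p) := by ring
    _ ≤ 2 * (1 + c) * (|u 0| + K) ^ 2 * 2 ^ p * (1 + ‖y‖) ^ (-p) := by gcongr

end Integrable

theorem stmt_17_general (d : ℕ) (α : ℝ) (hα : 0 < α)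
    (m : ℝ) (hm : 0 < m)
    (u : EuclideanSpace ℝ (Fin d) → ℝ) (K : NNReal) (hu : LipschitzWith K u) :
    Integrable (fun y : EuclideanSpace ℝ (Fin d) =>
      Psi d α (m ^ (1 / α) * ‖y‖) * min 1 (‖y‖ ^ (-((d : ℝ) + α))) * |u y| ^ 2) volume := by
  have hdα : 0 < (d : ℝ) + α := by positivity
  have hM : 0 < m ^ (1 / α) := rpow_pos_of_pos hm _
  set c := (∫ s in Ioi 0, s ^ (((d : ℝ) + α) / 2) * exp (-(s / 4))) / Ifun d α 0
  have hdecay (r : ℝ) : r ^ 2 * Psi d α (m ^ (1 / α) * r) ≤ c / (m ^ (1 / α)) ^ 2 := by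
    rw [le_div_iff₀ (by positivity)]
    calc r ^ 2 * Psi d α (m ^ (1 / α) * r) * (m ^ (1 / α)) ^ 2
        = (m ^ (1 / α) * r) ^ 2 * Psi d α (m ^ (1 / α) * r) := by ring
      _ ≤ c := sq_mul_Psi_le hdα _
  exact integrable_mul_min_one_rpow_neg_mul_sq_of_lipschitzWith
    (measurable_Psi.comp (measurable_const.mul measurable_id)) (fun _ => Psi_nonneg _)
    (fun _ => Psi_le_one hdα _) hdecay (by simp [hα]) hu

/-- Suppose `m > 0`.
Then for every Lipschitz `u : ℝᵈ → ℝ`, the function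
`y ↦ Ψ(m^{1/α}‖y‖) · min(1, ‖y‖^{−(d+α)}) · |u(y)|²` is in `L¹(ℝᵈ)`. -/
theorem stmt_17 (d : ℕ) (hd : 1 ≤ d) (α : ℝ) (hα : 0 < α) (hα2 : α < 2)
    (m : ℝ) (hm : 0 < m)
    (u : EuclideanSpace ℝ (Fin d) → ℝ) (K : NNReal) (hu : LipschitzWith K u) :
    Integrable (fun y : EuclideanSpace ℝ (Fin d) =>
      Psi d α (m ^ (1 / α) * ‖y‖) * min 1 (‖y‖ ^ (-((d : ℝ) + α))) * |u y| ^ 2) volume :=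
  stmt_17_general d α hα m hm u K hu
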